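/- Let C be a small category, let κ be an infinite regular cardinal, and let D be a filtered category having fewer than κ morphisms. Let X : D ⥤ C be a diagram and let X̄ denote the colimit in Ind C of the composite D ⥤ C ⥤ Ind C (the ind-object represented by the diagram X). Then for every regular cardinal λ ≥ κ and every functor Y from the linearly ordered category of ordinals strictly less than λ to Ind C, the canonical map colim_{β<λ} Hom_{Ind C}(X̄, Y_β) → Hom_{Ind C}(X̄, colim_{β<λ} Y_β) is a bijection. -/

import Mathlib

/-!
Representables are `κ`-presentable in `Ind C` for every regular `κ`: `Ind C` is a full
subcategory of presheaves closed under filtered colimits, and `Hom(yoneda c, -)` is evaluation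
at `c`. Since `κ`-presentable objects are closed under colimits indexed by categories with fewer
than `κ` arrows, `X̄` is `κ`-presentable, hence `λ`-presentable, and the ordinals below `λ` form a
`λ`-filtered category.
-/

open CategoryTheory CategoryTheory.Limits Opposite

universe v u

namespace CategoryTheory

lemma Functor.FullyFaithful.isCardinalPresentable_of_obj {A B : Type*} [Category A] [Category B]
    {F : A ⥤ B} (hF : F.FullyFaithful) (κ : Cardinal) [Fact κ.IsRegular]
    [F.IsCardinalAccessible κ] (X : A) [IsCardinalPresentable (F.obj X) κ] :
    IsCardinalPresentable X κ := by
  rw [isCardinalPresentable_iff_isCardinalAccessible_uliftCoyoneda_obj]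
  exact Functor.isCardinalAccessible_of_natIso (hF.homNatIso' X) κ

instance isCardinalPresentable_yoneda_obj {C : Type u} [SmallCategory C] (κ : Cardinal.{u})
    [Fact κ.IsRegular] (c : C) : IsCardinalPresentable (yoneda.obj c) κ :=
  isCardinalPresentable_of_iso (uliftYonedaIsoYoneda.{0}.app c) κ

namespace Ind

instance isCardinalAccessible_inclusion {C : Type u} [Category.{v} C] (κ : Cardinal.{v})
    [Fact κ.IsRegular] : (Ind.inclusion C).IsCardinalAccessible κ where
  preservesColimitOfShape J _ _ := by
    have := isFiltered_of_isCardinalFiltered J κ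
    infer_instance

instance isCardinalPresentable_yoneda_obj {C : Type u} [SmallCategory C] (κ : Cardinal.{u})
    [Fact κ.IsRegular] (c : C) : IsCardinalPresentable (Ind.yoneda.obj c) κ := by
  have : IsCardinalPresentable ((Ind.inclusion C).obj (Ind.yoneda.obj c)) κ :=
    isCardinalPresentable_of_iso (Ind.yonedaCompInclusion.app c).symm κ
  exact Ind.inclusion.fullyFaithful.isCardinalPresentable_of_obj κ _

lemma isCardinalPresentable_colimit_comp_yoneda {C : Type u} [SmallCategory C]
    (κ : Cardinal.{u}) [Fact κ.IsRegular] {D : Type u} [SmallCategory D] [IsFiltered D]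
    (hD : HasCardinalLT (Arrow D) κ) (X : D ⥤ C) :
    IsCardinalPresentable (colimit (X ⋙ Ind.yoneda)) κ :=
  have (d : D) : IsCardinalPresentable ((X ⋙ Ind.yoneda).obj d) κ :=
    inferInstanceAs (IsCardinalPresentable (Ind.yoneda.obj (X.obj d)) κ)
  isCardinalPresentable_of_isColimit _ (colimit.isColimit _) κ hD

end Ind

end CategoryTheory

/-- An ind-object representable by a filtered diagram with fewer than `κ` morphisms is
`κ`-small relative to all ind-maps: for every regular cardinal `λ ≥ κ` and every functor `Y`
from the linearly ordered category of ordinals strictly less than `λ` to `Ind C`, the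
canonical map `colim_{β<λ} Hom(X̄, Y β) → Hom(X̄, colim_{β<λ} Y β)` is a bijection, where
`X̄` is the colimit in `Ind C` of the composite `D ⥤ C ⥤ Ind C`. -/
theorem indObject_small_of_small_diagram
    {C : Type u} [SmallCategory C]
    (κ : Cardinal.{u}) (hκ : κ.IsRegular)
    {D : Type u} [SmallCategory D] [IsFiltered D]
    (hD : Cardinal.mk (Σ (d d' : D), d ⟶ d') < κ)
    (X : D ⥤ C)
    (l : Cardinal.{u}) (hl : l.IsRegular) (hκl : κ ≤ l)
    (Y : l.ord.ToType ⥤ Ind C) :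
    haveI : Nonempty l.ord.ToType :=
      Ordinal.nonempty_toType_iff.mpr (by
        simpa [Cardinal.ord_eq_zero] using hl.pos.ne')
    Function.Bijective
      (colimit.post Y (coyoneda.obj (op (colimit (X ⋙ Ind.yoneda))))) := by
  have : Fact κ.IsRegular := ⟨hκ⟩
  have : Fact l.IsRegular := ⟨hl⟩
  have hArrow : HasCardinalLT (Arrow D) κ := by
    rwa [hasCardinalLT_iff_of_equiv (Arrow.equivSigma D), hasCardinalLT_iff_cardinal_mk_lt]
  have := Ind.isCardinalPresentable_colimit_comp_yoneda κ hArrow X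
  have := isCardinalPresentable_of_le (colimit (X ⋙ Ind.yoneda)) hκl
  have := preservesColimitsOfShape_of_isCardinalPresentable (colimit (X ⋙ Ind.yoneda)) l
    l.ord.ToType
  exact (isIso_iff_bijective _).1 inferInstance
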